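/- arXiv:1612.03021 — 2 statements merged into one kernel-verified Lean document; each statement's English description precedes it below -/
import Mathlib

section
/- If M is a projective and 2-primal left module over an associative unital ring R, then N_s(M) = ⟨E_M(0)⟩ = β_co(M) = β(M). -/
universe u v w

/-- The envelope of zero in a ring `R`:
`E_R(0) = {r·s : r, s ∈ R, r^k·s = 0 for some positive integer k}`. -/
def ringEnvelopeZero (R : Type u) [Ring R] : Set R :=
  {x | ∃ (r s : R) (k : ℕ), 0 < k ∧ r ^ k * s = 0 ∧ x = r * s}

/-- A two-sided ideal `P` of `R` is prime if it is proper and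
`A·B ⊆ P` implies `A ⊆ P` or `B ⊆ P` for all two-sided ideals `A`, `B`. -/
def IsPrimeTwoSidedIdeal {R : Type u} [Ring R] (P : TwoSidedIdeal R) : Prop :=
  P ≠ ⊤ ∧ ∀ A B : TwoSidedIdeal R, (∀ a ∈ A, ∀ b ∈ B, a * b ∈ P) → A ≤ P ∨ B ≤ P

/-- A two-sided ideal `P` of `R` is completely prime if it is proper and
`a·b ∈ P` implies `a ∈ P` or `b ∈ P`. -/
def IsCompletelyPrimeTwoSidedIdeal {R : Type u} [Ring R] (P : TwoSidedIdeal R) : Prop :=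
  P ≠ ⊤ ∧ ∀ a b : R, a * b ∈ P → a ∈ P ∨ b ∈ P

/-- `β(R)`: the prime radical of `R`, the intersection of all prime two-sided ideals. -/
def ringPrimeRadical (R : Type u) [Ring R] : Set R :=
  {x | ∀ P : TwoSidedIdeal R, IsPrimeTwoSidedIdeal P → x ∈ P}

/-- `β_co(R)`: the completely prime radical of `R`. -/
def ringCompletelyPrimeRadical (R : Type u) [Ring R] : Set R :=
  {x | ∀ P : TwoSidedIdeal R, IsCompletelyPrimeTwoSidedIdeal P → x ∈ P}

/-- A ring is 2-primal if its set of nilpotent elements equals its prime radical. -/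
def IsTwoPrimalRing (R : Type u) [Ring R] : Prop :=
  {x : R | IsNilpotent x} = ringPrimeRadical R

section ModuleDefs

variable {R : Type u} [Ring R] {M : Type v} [AddCommGroup M] [Module R M]

/-- The envelope `E_M(N) = {r·m : r ∈ R, m ∈ M, r^k·m ∈ N for some positive integer k}`. -/
def envelope (N : Submodule R M) : Set M :=
  {x | ∃ (r : R) (m : M) (k : ℕ), 0 < k ∧ r ^ k • m ∈ N ∧ x = r • m}

/-- `P` is a prime submodule of `M`: `P ≠ M` and for every two-sided ideal `A` of `R` and
every submodule `N` of `M`, `A·N ⊆ P` implies `N ⊆ P` or `A·M ⊆ P`. -/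
def IsPrimeSubmodule (P : Submodule R M) : Prop :=
  P ≠ ⊤ ∧ ∀ (A : TwoSidedIdeal R) (N : Submodule R M),
    (∀ a ∈ A, ∀ n ∈ N, a • n ∈ P) → N ≤ P ∨ ∀ a ∈ A, ∀ m : M, a • m ∈ P

/-- `P` is a completely prime submodule of `M`: `P ≠ M` and `r·m ∈ P` implies
`m ∈ P` or `r·M ⊆ P`. -/
def IsCompletelyPrimeSubmodule (P : Submodule R M) : Prop :=
  P ≠ ⊤ ∧ ∀ (r : R) (m : M), r • m ∈ P → m ∈ P ∨ ∀ m' : M, r • m' ∈ P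

/-- `P` is a completely semiprime submodule of `M`: `P ≠ M` and `a²·m ∈ P` implies `a·m ∈ P`. -/
def IsCompletelySemiprimeSubmodule (P : Submodule R M) : Prop :=
  P ≠ ⊤ ∧ ∀ (a : R) (m : M), (a * a) • m ∈ P → a • m ∈ P

/-- `β^s(N)`: the intersection of all prime submodules of `M` containing `N`
(`= M` if there are none). -/
def primeRadicalOf (N : Submodule R M) : Submodule R M :=
  sInf {P : Submodule R M | IsPrimeSubmodule P ∧ N ≤ P}

/-- `β_co^s(N)`: the intersection of all completely prime submodules of `M` containing `N`
(`= M` if there are none). -/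
def cPrimeRadicalOf (N : Submodule R M) : Submodule R M :=
  sInf {P : Submodule R M | IsCompletelyPrimeSubmodule P ∧ N ≤ P}

/-- An element `m` of `M` is strongly nilpotent if `m = a_1·m_1 + … + a_r·m_r` such that for
every `i` and every sequence `a_{i,1}, a_{i,2}, …` with `a_{i,1} = a_i` and
`a_{i,n+1} ∈ a_{i,n}·R·a_{i,n}`, there exists `k` with `a_{i,k}·R·m_i = 0`. -/
def IsStronglyNilpotent (R : Type u) [Ring R] {M : Type v} [AddCommGroup M] [Module R M]
    (m : M) : Prop :=
  ∃ (r : ℕ) (a : Fin r → R) (mi : Fin r → M),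
    m = ∑ i, a i • mi i ∧
    ∀ (i : Fin r) (s : ℕ → R), s 0 = a i → (∀ n, ∃ t : R, s (n + 1) = s n * t * s n) →
      ∃ k, ∀ t : R, (s k * t) • mi i = 0

/-- `N_s(M)`: the set of strongly nilpotent elements of `M`. -/
def stronglyNilpotentSet (R : Type u) [Ring R] (M : Type v) [AddCommGroup M] [Module R M] :
    Set M :=
  {m : M | IsStronglyNilpotent R m}

end ModuleDefs
section AuxProofs

open TwoSidedIdeal in
/-- Every m-sequence starting at an element of the prime radical of a ring eventually
hits zero. -/
theorem ringPrimeRadical_mseq {R : Type u} [Ring R] (a : R) (ha : a ∈ ringPrimeRadical R)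
    (s : ℕ → R) (hs0 : s 0 = a) (hstep : ∀ n, ∃ t : R, s (n + 1) = s n * t * s n) :
    ∃ k, s k = 0 := by
  by_contra hne
  push_neg at hne
  have hbot : (⊥ : TwoSidedIdeal R) ∈ {I : TwoSidedIdeal R | ∀ n, s n ∉ I} :=
    fun n h => hne n h
  have hub : ∀ c ⊆ {I : TwoSidedIdeal R | ∀ n, s n ∉ I}, IsChain (· ≤ ·) c → ∀ y ∈ c,
      ∃ ub ∈ {I : TwoSidedIdeal R | ∀ n, s n ∉ I}, ∀ z ∈ c, z ≤ ub := by
    intro c hcC hchain y hyc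
    refine ⟨TwoSidedIdeal.mk' (⋃ I ∈ c, (I : Set R))
      (Set.mem_biUnion hyc y.zero_mem)
      (fun {x₁ x₂} hx₁ hx₂ => ?_) (fun {x₁} hx₁ => ?_)
      (fun {x₁ x₂} hx₂ => ?_) (fun {x₁ x₂} hx₁ => ?_), fun n hn => ?_, fun z hz => ?_⟩
    · obtain ⟨I, hIc, hxI⟩ := Set.mem_iUnion₂.mp hx₁
      obtain ⟨J, hJc, hyJ⟩ := Set.mem_iUnion₂.mp hx₂
      rcases hchain.total hIc hJc with h | h
      · exact Set.mem_biUnion hJc (J.add_mem (h hxI) hyJ)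
      · exact Set.mem_biUnion hIc (I.add_mem hxI (h hyJ))
    · obtain ⟨I, hIc, hxI⟩ := Set.mem_iUnion₂.mp hx₁
      exact Set.mem_biUnion hIc (I.neg_mem hxI)
    · obtain ⟨I, hIc, hxI⟩ := Set.mem_iUnion₂.mp hx₂
      exact Set.mem_biUnion hIc (I.mul_mem_left _ _ hxI)
    · obtain ⟨I, hIc, hxI⟩ := Set.mem_iUnion₂.mp hx₁
      exact Set.mem_biUnion hIc (I.mul_mem_right _ _ hxI)
    · rw [TwoSidedIdeal.mem_mk'] at hn
      obtain ⟨I, hIc, hsI⟩ := Set.mem_iUnion₂.mp hn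
      exact hcC hIc n hsI
    · intro x hx
      rw [TwoSidedIdeal.mem_mk']
      exact Set.mem_biUnion hz hx
  obtain ⟨P, -, hPC, hPmax⟩ :=
    zorn_le_nonempty₀ {I : TwoSidedIdeal R | ∀ n, s n ∉ I} hub ⊥ hbot
  -- `P` is a prime two-sided ideal
  have hprime : IsPrimeTwoSidedIdeal P := by
    refine ⟨fun h => hPC 0 (by rw [h]; exact TwoSidedIdeal.mem_top R), ?_⟩
    intro A B hAB
    by_contra hcon
    push_neg at hcon
    obtain ⟨hA, hB⟩ := hcon
    -- if an ideal is not contained in P, then some s m lies in P + J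
    have key : ∀ J : TwoSidedIdeal R, ¬ J ≤ P → ∃ m, ∃ p ∈ P, ∃ j ∈ J, s m = p + j := by
      intro J hJ
      set K : TwoSidedIdeal R := TwoSidedIdeal.mk' {x | ∃ p ∈ P, ∃ j ∈ J, x = p + j}
        ⟨0, P.zero_mem, 0, J.zero_mem, by rw [add_zero]⟩
        (fun {x₁ x₂} ⟨p₁, hp₁, j₁, hj₁, h₁⟩ ⟨p₂, hp₂, j₂, hj₂, h₂⟩ =>
          ⟨p₁ + p₂, P.add_mem hp₁ hp₂, j₁ + j₂, J.add_mem hj₁ hj₂, by rw [h₁, h₂]; abel⟩)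
        (fun {x₁} ⟨p, hp, j, hj, h⟩ =>
          ⟨-p, P.neg_mem hp, -j, J.neg_mem hj, by rw [h]; abel⟩)
        (fun {x₁ x₂} ⟨p, hp, j, hj, h⟩ =>
          ⟨x₁ * p, P.mul_mem_left _ _ hp, x₁ * j, J.mul_mem_left _ _ hj, by rw [h, mul_add]⟩)
        (fun {x₁ x₂} ⟨p, hp, j, hj, h⟩ =>
          ⟨p * x₂, P.mul_mem_right _ _ hp, j * x₂, J.mul_mem_right _ _ hj,
            by rw [h, add_mul]⟩) with hK
      by_cases hKC : ∀ n, s n ∉ K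
      · have hPK : P ≤ K := fun x hx => by
          rw [hK, TwoSidedIdeal.mem_mk']
          exact ⟨x, hx, 0, J.zero_mem, (add_zero x).symm⟩
        have hKP : K ≤ P := hPmax hKC hPK
        exact absurd (fun j hj => hKP (by
          rw [hK, TwoSidedIdeal.mem_mk']
          exact ⟨0, P.zero_mem, j, hj, (zero_add j).symm⟩)) hJ
      · push_neg at hKC
        obtain ⟨m, hm⟩ := hKC
        rw [hK, TwoSidedIdeal.mem_mk'] at hm
        exact ⟨m, hm⟩
    -- decompositions persist along the sequence
    have persist : ∀ (J : TwoSidedIdeal R) (m : ℕ), (∃ p ∈ P, ∃ j ∈ J, s m = p + j) →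
        ∀ l, ∃ p ∈ P, ∃ j ∈ J, s (m + l) = p + j := by
      intro J m h l
      induction l with
      | zero => exact h
      | succ l ih =>
        obtain ⟨p, hp, j, hj, hsl⟩ := ih
        obtain ⟨t, ht⟩ := hstep (m + l)
        refine ⟨p * t * p + p * (t * j) + j * t * p, ?_, j * t * j,
          J.mul_mem_right _ _ (J.mul_mem_right _ _ hj), ?_⟩
        · exact P.add_mem (P.add_mem (P.mul_mem_right _ _ (P.mul_mem_right _ _ hp))
            (P.mul_mem_right _ _ hp)) (P.mul_mem_left _ _ hp)
        · show s (m + l + 1) = p * t * p + p * (t * j) + j * t * p + j * t * j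
          rw [ht, hsl]; noncomm_ring
    obtain ⟨mA, hmA⟩ := key A hA
    obtain ⟨mB, hmB⟩ := key B hB
    set N := max mA mB with hN
    have hAN : ∃ p ∈ P, ∃ j ∈ A, s N = p + j := by
      have h := persist A mA hmA (N - mA)
      rwa [Nat.add_sub_cancel' (le_max_left _ _)] at h
    have hBN : ∃ p ∈ P, ∃ j ∈ B, s N = p + j := by
      have h := persist B mB hmB (N - mB)
      rwa [Nat.add_sub_cancel' (le_max_right _ _)] at h
    obtain ⟨p, hp, a', ha', hA'⟩ := hAN
    obtain ⟨q, hq, b, hb, hB'⟩ := hBN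
    obtain ⟨t, ht⟩ := hstep N
    refine hPC (N + 1) ?_
    have hexp : s (N + 1) = (p * (t * q) + p * (t * b) + a' * t * q) + a' * t * b := by
      rw [ht]
      nth_rewrite 1 [hA']
      rw [hB']
      noncomm_ring
    rw [hexp]
    exact P.add_mem (P.add_mem (P.add_mem (P.mul_mem_right _ _ hp) (P.mul_mem_right _ _ hp))
      (P.mul_mem_left _ _ hq)) (hAB _ (A.mul_mem_right _ _ ha') _ hb)
  exact hPC 0 (by rw [hs0]; exact ha P hprime)

/-- Elements of the prime radical of a ring are nilpotent. -/
theorem ringPrimeRadical_isNilpotent {R : Type u} [Ring R] (a : R)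
    (ha : a ∈ ringPrimeRadical R) : IsNilpotent a := by
  obtain ⟨k, hk⟩ := ringPrimeRadical_mseq a ha (fun n => a ^ (2 ^ n))
    (by simp) (fun n => ⟨1, by
      show a ^ 2 ^ (n + 1) = a ^ 2 ^ n * 1 * a ^ 2 ^ n
      rw [mul_one, ← pow_add]
      congr 1
      omega⟩)
  exact ⟨2 ^ k, hk⟩

variable {R : Type u} [Ring R] {M : Type v} [AddCommGroup M] [Module R M]

/-- Strongly nilpotent elements of a module lie in every prime submodule. -/
theorem isStronglyNilpotent_mem_prime {m : M} (hm : IsStronglyNilpotent R m)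
    {P : Submodule R M} (hP : IsPrimeSubmodule P) : m ∈ P := by
  obtain ⟨r, a, mi, hsum, hseq⟩ := hm
  rw [hsum]
  refine Submodule.sum_mem _ fun i _ => ?_
  -- it suffices to show `a i • mi i ∈ P`
  have key : ∀ x : R,
      ((∀ s : ℕ → R, s 0 = x → (∀ n, ∃ t : R, s (n + 1) = s n * t * s n) →
        ∃ k, ∀ t : R, (s k * t) • mi i = 0)) → ∀ t : R, (x * t) • mi i ∈ P := by
    intro x hx
    by_contra hbad0
    push_neg at hbad0
    have step : ∀ y : R, (∃ t : R, (y * t) • mi i ∉ P) →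
        ∃ t : R, ∃ u : R, ((y * t * y) * u) • mi i ∉ P := by
      intro y hy
      by_contra hns
      push_neg at hns
      -- hns : ∀ t u, ((y * t * y) * u) • mi i ∈ P
      set N : Submodule R M :=
        { carrier := {z | ∀ c : R, (y * c) • z ∈ P}
          add_mem' := fun hz₁ hz₂ c => by rw [smul_add]; exact P.add_mem (hz₁ c) (hz₂ c)
          zero_mem' := fun c => by rw [smul_zero]; exact P.zero_mem
          smul_mem' := fun c z hz d => by
            rw [smul_smul, mul_assoc]; exact hz (d * c) } with hNdef
      set A : TwoSidedIdeal R := TwoSidedIdeal.mk' {c | ∀ z ∈ N, c • z ∈ P}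
        (fun z _ => by rw [zero_smul]; exact P.zero_mem)
        (fun {c d} hc hd z hz => by rw [add_smul]; exact P.add_mem (hc z hz) (hd z hz))
        (fun {c} hc z hz => by rw [neg_smul]; exact P.neg_mem (hc z hz))
        (fun {c d} hd z hz => by rw [mul_smul]; exact P.smul_mem c (hd z hz))
        (fun {c d} hc z hz => by rw [mul_smul]; exact hc _ (N.smul_mem d hz)) with hAdef
      have hAN : ∀ c ∈ A, ∀ z ∈ N, c • z ∈ P := by
        intro c hc
        rw [hAdef, TwoSidedIdeal.mem_mk'] at hc
        exact hc
      have hyA : y ∈ A := by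
        rw [hAdef, TwoSidedIdeal.mem_mk']
        intro z hz
        have := hz 1
        rwa [mul_one] at this
      obtain ⟨t0, ht0⟩ := hy
      rcases hP.2 A N hAN with hNP | hAM
      · refine ht0 (hNP ?_)
        -- (y * t0) • mi i ∈ N
        intro c
        rw [smul_smul, ← mul_assoc]
        exact hns c t0
      · have := hAM y hyA (t0 • mi i)
        rw [smul_smul] at this
        exact ht0 this
    -- build an m-sequence all of whose members are "bad"
    let f : ℕ → {y : R // ∃ t : R, (y * t) • mi i ∉ P} := fun k =>
      Nat.rec ⟨x, hbad0⟩ (fun _ p =>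
        ⟨p.1 * (step p.1 p.2).choose * p.1,
          let u := ((step p.1 p.2).choose_spec).choose
          let hu := ((step p.1 p.2).choose_spec).choose_spec
          ⟨u, hu⟩⟩) k
    obtain ⟨k, hk⟩ := hx (fun k => (f k).1) rfl
      (fun k => ⟨(step (f k).1 (f k).2).choose, rfl⟩)
    obtain ⟨t, ht⟩ := (f k).2
    exact ht (by rw [hk t]; exact P.zero_mem)
  have := key (a i) (hseq i) 1
  rwa [mul_one] at this

/-- The set `β(R)·M` of products of a prime-radical ring element with a module element. -/
def radSmulSet (R : Type u) [Ring R] (M : Type v) [AddCommGroup M] [Module R M] : Set M :=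
  {y : M | ∃ a ∈ ringPrimeRadical R, ∃ m : M, y = a • m}

/-- For a projective module, the prime radical is contained in `β(R)·M`. -/
theorem primeRadicalOf_le_span_radSmulSet (hproj : Module.Projective R M) :
    primeRadicalOf (⊥ : Submodule R M) ≤ Submodule.span R (radSmulSet R M) := by
  obtain ⟨sec, hsec⟩ := Module.projective_def.mp hproj
  intro x hx
  have hcoord : ∀ m₀ : M, sec x m₀ ∈ ringPrimeRadical R := by
    intro m₀ 𝔭 h𝔭
    set ψ : M →ₗ[R] R := (Finsupp.lapply m₀).comp sec with hψ
    set Q : Submodule R M := Submodule.comap ψ (TwoSidedIdeal.asIdeal 𝔭) with hQdef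
    have hmemQ : ∀ z : M, z ∈ Q ↔ ψ z ∈ 𝔭 := by
      intro z
      rw [hQdef, Submodule.mem_comap, TwoSidedIdeal.mem_asIdeal]
    have hxQ : x ∈ Q := by
      by_cases hQ : Q = ⊤
      · rw [hQ]; trivial
      · refine Submodule.mem_sInf.mp hx Q ⟨⟨hQ, ?_⟩, bot_le⟩
        intro A N hAN
        by_contra hcon
        push_neg at hcon
        obtain ⟨hN, hA⟩ := hcon
        set B : TwoSidedIdeal R := TwoSidedIdeal.mk' {b | ∀ c ∈ A, c * b ∈ 𝔭}
          (fun c _ => by rw [mul_zero]; exact 𝔭.zero_mem)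
          (fun {b₁ b₂} h₁ h₂ c hc => by rw [mul_add]; exact 𝔭.add_mem (h₁ c hc) (h₂ c hc))
          (fun {b} h c hc => by rw [mul_neg]; exact 𝔭.neg_mem (h c hc))
          (fun {b₁ b₂} h₂ c hc => by rw [← mul_assoc]; exact h₂ _ (A.mul_mem_right _ _ hc))
          (fun {b₁ b₂} h₁ c hc => by rw [← mul_assoc]; exact 𝔭.mul_mem_right _ _ (h₁ c hc))
          with hBdef
        rcases h𝔭.2 A B (fun a haA b hbB => by
            rw [hBdef, TwoSidedIdeal.mem_mk'] at hbB; exact hbB a haA) with hA𝔭 | hB𝔭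
        · obtain ⟨a0, ha0, m0, hm0⟩ := hA
          refine hm0 ?_
          rw [hmemQ, map_smul, smul_eq_mul]
          exact 𝔭.mul_mem_right _ _ (hA𝔭 ha0)
        · refine hN ?_
          intro z hz
          rw [hmemQ]
          refine hB𝔭 ?_
          rw [hBdef, TwoSidedIdeal.mem_mk']
          intro c hc
          have := hAN c hc z hz
          rw [hmemQ, map_smul, smul_eq_mul] at this
          exact this
    rw [hmemQ] at hxQ
    exact hxQ
  have hx2 : x = ∑ m₀ ∈ (sec x).support, (sec x) m₀ • m₀ := by
    conv_lhs => rw [← hsec x]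
    rw [Finsupp.linearCombination_apply, Finsupp.sum]
    simp
  rw [hx2]
  exact Submodule.sum_mem _ fun m₀ _ => Submodule.subset_span ⟨_, hcoord m₀, m₀, rfl⟩

/-- `β(R)·M` consists of strongly nilpotent elements. -/
theorem span_radSmulSet_subset_stronglyNilpotent :
    (Submodule.span R (radSmulSet R M) : Set M) ⊆ stronglyNilpotentSet R M := by
  intro x hx
  rw [SetLike.mem_coe, Submodule.mem_span_set'] at hx
  obtain ⟨n, f, g, hsum⟩ := hx
  choose a ha m' hm' using fun i => (g i).2
  refine ⟨n, fun i => f i * a i, m', ?_, ?_⟩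
  · rw [← hsum]
    exact (Finset.sum_congr rfl fun i _ => by rw [hm' i, smul_smul]).symm
  · intro i s hs0 hstep
    have hmem : f i * a i ∈ ringPrimeRadical R :=
      fun P hP => P.mul_mem_left _ _ (ha i P hP)
    obtain ⟨k, hk⟩ := ringPrimeRadical_mseq _ hmem s hs0 hstep
    exact ⟨k, fun t => by rw [hk, zero_mul, zero_smul]⟩

/-- `β(R)·M` is contained in the span of the envelope of zero. -/
theorem span_radSmulSet_le_span_envelope :
    Submodule.span R (radSmulSet R M) ≤ Submodule.span R (envelope (⊥ : Submodule R M)) := by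
  refine Submodule.span_le.mpr ?_
  rintro y ⟨a, ha, m', rfl⟩
  obtain ⟨k, hk⟩ := ringPrimeRadical_isNilpotent a ha
  refine Submodule.subset_span ⟨a, m', k + 1, k.succ_pos, ?_, rfl⟩
  rw [pow_succ, hk, zero_mul, zero_smul]
  exact Submodule.zero_mem _

/-- The span of the envelope of zero is contained in the completely prime radical. -/
theorem span_envelope_le_cPrimeRadicalOf :
    Submodule.span R (envelope (⊥ : Submodule R M)) ≤ cPrimeRadicalOf (⊥ : Submodule R M) := by
  refine Submodule.span_le.mpr ?_
  rintro y ⟨r0, m', k, hk, hmem, rfl⟩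
  rw [SetLike.mem_coe]
  refine Submodule.mem_sInf.mpr fun P hP => ?_
  obtain ⟨⟨hPtop, hPcp⟩, -⟩ := hP
  have claim : ∀ (j : ℕ) (z : M), r0 ^ (j + 1) • z ∈ P → r0 • z ∈ P := by
    intro j
    induction j with
    | zero => intro z h; rwa [pow_one] at h
    | succ j ih =>
      intro z h
      rw [pow_succ, mul_smul] at h
      rcases hPcp r0 (r0 • z) (ih _ h) with h3 | h3
      · exact h3
      · exact h3 z
  obtain ⟨j, rfl⟩ : ∃ j, k = j + 1 := ⟨k - 1, (Nat.succ_pred_eq_of_pos hk).symm⟩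
  refine claim j m' ?_
  rw [(Submodule.mem_bot R).mp hmem]
  exact P.zero_mem

end AuxProofs
/-- if `M` is projective and 2-primal then
`N_s(M) = ⟨E_M(0)⟩ = β_co(M) = β(M)`. -/
theorem stmt6 {R : Type u} [Ring R] {M : Type v} [AddCommGroup M] [Module R M]
    (hproj : Module.Projective R M)
    (h2p : primeRadicalOf (⊥ : Submodule R M) = cPrimeRadicalOf (⊥ : Submodule R M)) :
    stronglyNilpotentSet R M =
      (Submodule.span R (envelope (⊥ : Submodule R M)) : Set M) ∧
    Submodule.span R (envelope (⊥ : Submodule R M)) = cPrimeRadicalOf (⊥ : Submodule R M) ∧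
    cPrimeRadicalOf (⊥ : Submodule R M) = primeRadicalOf (⊥ : Submodule R M) := by

  have h1 : primeRadicalOf (⊥ : Submodule R M) ≤ Submodule.span R (radSmulSet R M) :=
    primeRadicalOf_le_span_radSmulSet hproj
  have h2 := span_radSmulSet_le_span_envelope (R := R) (M := M)
  have h3 := span_envelope_le_cPrimeRadicalOf (R := R) (M := M)
  have hEq : Submodule.span R (envelope (⊥ : Submodule R M)) =
      cPrimeRadicalOf (⊥ : Submodule R M) :=
    le_antisymm h3 (by rw [← h2p]; exact h1.trans h2)
  refine ⟨?_, hEq, h2p.symm⟩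
  ext x
  constructor
  · intro hx
    have hxr : x ∈ primeRadicalOf (⊥ : Submodule R M) :=
      Submodule.mem_sInf.mpr fun P hP => isStronglyNilpotent_mem_prime hx hP.1
    exact h1.trans h2 hxr
  · intro hx
    have hx' : x ∈ Submodule.span R (radSmulSet R M) := by
      have hx2 : x ∈ primeRadicalOf (⊥ : Submodule R M) := by
        rw [h2p, ← hEq]; exact hx
      exact h1 hx2
    exact span_radSmulSet_subset_stronglyNilpotent hx'
end

section
/- Let φ : M → M' be a surjective homomorphism of left R-modules. (i) If N is a submodule of M with ker φ ⊆ N and β^s(N) = ⟨E_M(N)⟩, then β^s(φ(N)) = ⟨E_{M'}(φ(N))⟩. (ii) If N' is a submodule of M' and β^s(N') = ⟨E_{M'}(N')⟩, then β^s(φ^{-1}(N')) = ⟨E_M(φ^{-1}(N'))⟩. -/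
universe u v w

section Aux

variable {R : Type u} [Ring R] {M : Type v} [AddCommGroup M] [Module R M]
    {M' : Type w} [AddCommGroup M'] [Module R M'] (φ : M →ₗ[R] M')

lemma ker_lift {P : Submodule R M} (hker : LinearMap.ker φ ≤ P)
    {x y : M} (h : φ y = φ x) (hy : y ∈ P) : x ∈ P := by
  have hxy : x - y ∈ LinearMap.ker φ := by
    simp [LinearMap.mem_ker, map_sub, h]
  have := P.add_mem hy (hker hxy)
  simpa using this

lemma auxComapPrime (hφ : Function.Surjective φ) {P' : Submodule R M'}
    (h : IsPrimeSubmodule P') : IsPrimeSubmodule (P'.comap φ) := by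
  refine ⟨?_, ?_⟩
  · intro htop
    apply h.1
    rw [eq_top_iff]
    intro m' _
    obtain ⟨m, rfl⟩ := hφ m'
    have hm : m ∈ P'.comap φ := htop ▸ Submodule.mem_top
    exact hm
  · intro A N hAN
    have key : ∀ a ∈ A, ∀ n ∈ N.map φ, a • n ∈ P' := by
      rintro a ha n ⟨x, hx, rfl⟩
      have := hAN a ha x hx
      rw [Submodule.mem_comap, map_smul] at this
      exact this
    rcases h.2 A (N.map φ) key with h1 | h2
    · left
      intro n hn
      exact Submodule.mem_comap.2 (h1 ⟨n, hn, rfl⟩)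
    · right
      intro a ha m
      exact Submodule.mem_comap.2 (by rw [map_smul]; exact h2 a ha (φ m))

lemma auxMapPrime (hφ : Function.Surjective φ) {P : Submodule R M}
    (hker : LinearMap.ker φ ≤ P) (h : IsPrimeSubmodule P) :
    IsPrimeSubmodule (P.map φ) := by
  refine ⟨?_, ?_⟩
  · intro htop
    apply h.1
    rw [eq_top_iff]
    intro m _
    have hm : φ m ∈ P.map φ := htop ▸ Submodule.mem_top
    obtain ⟨y, hy, hyx⟩ := hm
    exact ker_lift φ hker hyx hy
  · intro A N' hAN'
    have key : ∀ a ∈ A, ∀ n ∈ N'.comap φ, a • n ∈ P := by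
      intro a ha n hn
      have h1 : a • φ n ∈ P.map φ := hAN' a ha (φ n) (Submodule.mem_comap.1 hn)
      obtain ⟨y, hy, hyx⟩ := h1
      exact ker_lift φ hker (by rw [hyx, map_smul]) hy
    rcases h.2 A (N'.comap φ) key with h1 | h2
    · left
      intro x' hx'
      obtain ⟨x, rfl⟩ := hφ x'
      exact Submodule.mem_map.2 ⟨x, h1 (Submodule.mem_comap.2 hx'), rfl⟩
    · right
      intro a ha m'
      obtain ⟨m, rfl⟩ := hφ m'
      exact Submodule.mem_map.2 ⟨a • m, h2 a ha m, by rw [map_smul]⟩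

lemma auxMapPrimeRadical (hφ : Function.Surjective φ) {N : Submodule R M}
    (hker : LinearMap.ker φ ≤ N) :
    primeRadicalOf (N.map φ) = (primeRadicalOf N).map φ := by
  apply le_antisymm
  · intro x' hx'
    obtain ⟨x, rfl⟩ := hφ x'
    refine Submodule.mem_map.2 ⟨x, ?_, rfl⟩
    rw [primeRadicalOf, Submodule.mem_sInf]
    rintro P ⟨hP, hNP⟩
    have hPker : LinearMap.ker φ ≤ P := le_trans hker hNP
    have hmem : φ x ∈ P.map φ := by
      rw [primeRadicalOf, Submodule.mem_sInf] at hx'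
      exact hx' _ ⟨auxMapPrime φ hφ hPker hP, Submodule.map_mono hNP⟩
    obtain ⟨y, hy, hyx⟩ := hmem
    exact ker_lift φ hPker hyx hy
  · intro x' hxmem
    obtain ⟨x, hx, rfl⟩ := Submodule.mem_map.1 hxmem
    rw [primeRadicalOf, Submodule.mem_sInf]
    rintro P' ⟨hP', hNP'⟩
    rw [primeRadicalOf, Submodule.mem_sInf] at hx
    have : x ∈ P'.comap φ := hx _ ⟨auxComapPrime φ hφ hP',
      le_trans (Submodule.le_comap_map φ N) (Submodule.comap_mono hNP')⟩
    exact this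

lemma auxComapPrimeRadical (hφ : Function.Surjective φ) (N' : Submodule R M') :
    primeRadicalOf (N'.comap φ) = (primeRadicalOf N').comap φ := by
  apply le_antisymm
  · intro x hx
    rw [Submodule.mem_comap, primeRadicalOf, Submodule.mem_sInf]
    rintro P' ⟨hP', hNP'⟩
    rw [primeRadicalOf, Submodule.mem_sInf] at hx
    exact hx _ ⟨auxComapPrime φ hφ hP', Submodule.comap_mono hNP'⟩
  · intro x hx
    rw [Submodule.mem_comap, primeRadicalOf, Submodule.mem_sInf] at hx
    rw [primeRadicalOf, Submodule.mem_sInf]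
    rintro P ⟨hP, hNP⟩
    have hPker : LinearMap.ker φ ≤ P := le_trans (by
      intro y hy
      simp only [LinearMap.mem_ker] at hy
      simp [Submodule.mem_comap, hy]) hNP
    have hmem : φ x ∈ P.map φ := hx _ ⟨auxMapPrime φ hφ hPker hP, by
      rw [← Submodule.map_comap_eq_of_surjective hφ N']
      exact Submodule.map_mono hNP⟩
    obtain ⟨y, hy, hyx⟩ := hmem
    exact ker_lift φ hPker hyx hy

lemma self_subset_envelope (N : Submodule R M) : (N : Set M) ⊆ envelope N := by
  intro n hn
  exact ⟨1, n, 1, one_pos, by simpa using hn, by simp⟩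

lemma envelope_map (hφ : Function.Surjective φ) {N : Submodule R M}
    (hker : LinearMap.ker φ ≤ N) :
    envelope (N.map φ) = φ '' envelope N := by
  ext x'
  constructor
  · rintro ⟨r, m', k, hk, hmem, rfl⟩
    obtain ⟨m, rfl⟩ := hφ m'
    obtain ⟨n, hn, hn'⟩ := hmem
    have hmN : r ^ k • m ∈ N := by
      refine ker_lift φ hker ?_ hn
      rw [hn', map_smul]
    exact ⟨r • m, ⟨r, m, k, hk, hmN, rfl⟩, by rw [map_smul]⟩
  · rintro ⟨x, ⟨r, m, k, hk, hmem, rfl⟩, rfl⟩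
    exact ⟨r, φ m, k, hk, ⟨r ^ k • m, hmem, by rw [map_smul]⟩, by rw [map_smul]⟩

lemma span_envelope_comap (hφ : Function.Surjective φ) (N' : Submodule R M') :
    Submodule.span R (envelope (N'.comap φ)) =
      (Submodule.span R (envelope N')).comap φ := by
  have hker : LinearMap.ker φ ≤ N'.comap φ := by
    intro y hy
    simp only [LinearMap.mem_ker] at hy
    simp [Submodule.mem_comap, hy]
  have henv : envelope N' = φ '' envelope (N'.comap φ) := by
    rw [← envelope_map φ hφ hker, Submodule.map_comap_eq_of_surjective hφ]
  apply le_antisymm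
  · rw [Submodule.span_le]
    rintro x ⟨r, m, k, hk, hmem, rfl⟩
    have : φ (r • m) ∈ envelope N' := by
      rw [map_smul]
      exact ⟨r, φ m, k, hk, by rw [← map_smul]; exact hmem, rfl⟩
    exact Submodule.mem_comap.2 (Submodule.subset_span this)
  · intro x hx
    rw [Submodule.mem_comap, henv, Submodule.span_image] at hx
    obtain ⟨y, hy, hyx⟩ := hx
    refine ker_lift φ ?_ hyx hy
    intro z hz
    exact Submodule.subset_span (self_subset_envelope _ (hker hz))

end Aux

/-- for a surjective `φ : M → M'`:
(i) if `ker φ ⊆ N` and `β^s(N) = ⟨E_M(N)⟩` then `β^s(φ(N)) = ⟨E_{M'}(φ(N))⟩`;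
(ii) if `β^s(N') = ⟨E_{M'}(N')⟩` then `β^s(φ⁻¹(N')) = ⟨E_M(φ⁻¹(N'))⟩`. -/
theorem stmt9 {R : Type u} [Ring R] {M : Type v} [AddCommGroup M] [Module R M]
    {M' : Type w} [AddCommGroup M'] [Module R M']
    (φ : M →ₗ[R] M') (hφ : Function.Surjective φ) :
    (∀ N : Submodule R M, LinearMap.ker φ ≤ N →
      primeRadicalOf N = Submodule.span R (envelope N) →
      primeRadicalOf (N.map φ) = Submodule.span R (envelope (N.map φ))) ∧
    (∀ N' : Submodule R M',
      primeRadicalOf N' = Submodule.span R (envelope N') →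
      primeRadicalOf (N'.comap φ) = Submodule.span R (envelope (N'.comap φ))) := by
  constructor
  · intro N hker h
    rw [auxMapPrimeRadical φ hφ hker, h, envelope_map φ hφ hker, Submodule.span_image]
  · intro N' h
    rw [auxComapPrimeRadical φ hφ, h, span_envelope_comap φ hφ]
end
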